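/- arXiv:math/0601472 — 2 statements merged into one kernel-verified Lean document; each statement's English description precedes it below -/
import Mathlib

section
/- For integers m, n with n ≥ 0, and all integers s, u, r with r ≥ 0, the identity [(s-u) choose r] = ∑_p (-1)^p v^{p(s-u-r+1)+ru} [u choose p] [(s-p) choose (r-p)] holds, where the sum is over 0 ≤ p ≤ min(u, r). -/
noncomputable section

open Finset

/-- The field `ℚ(v)` of rational functions, with `v` an indeterminate. -/
abbrev Fv : Type := RatFunc ℚ

/-- The indeterminate `v`. -/
def vv : Fv := RatFunc.X

/-- Quantum integer `[m] = (v^m - v^{-m})/(v - v^{-1})`. -/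
def qint (m : ℤ) : Fv := (vv ^ m - vv ^ (-m)) / (vv - vv⁻¹)

/-- Quantum factorial `[n]! = [n][n-1]⋯[1]`, with `[0]! = 1`. -/
def qfact (n : ℕ) : Fv := ∏ i ∈ Finset.range n, qint (i + 1)

/-- Falling quantum factorial `[m]_{(j)} = [m][m-1]⋯[m-j+1]`, defined for any integer `m`. -/
def qfall (m : ℤ) (j : ℕ) : Fv := ∏ i ∈ Finset.range j, qint (m - i)

/-- Quantum binomial coefficient `[m choose j] = [m]_{(j)}/[j]!`, for any integer `m`. -/
def qbinom (m : ℤ) (j : ℕ) : Fv := qfall m j / qfact j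

lemma vv_ne : vv ≠ 0 := RatFunc.X_ne_zero
lemma vv_zpow_ne (m : ℤ) : vv ^ m ≠ 0 := zpow_ne_zero _ vv_ne

lemma vv_pow_ne_one (n : ℕ) (h : n ≠ 0) : vv ^ n ≠ 1 := by
  intro hh
  have hX : (Polynomial.X : Polynomial ℚ) ^ n = 1 := by
    apply RatFunc.algebraMap_injective ℚ
    simpa [vv, map_pow, RatFunc.algebraMap_X] using hh
  have := congrArg Polynomial.natDegree hX
  simp [Polynomial.natDegree_X_pow] at this
  exact h this

lemma vv_zpow_sub_ne (m : ℤ) (h : 0 < m) : vv ^ m - vv ^ (-m) ≠ 0 := by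
  intro hh
  have h1 : vv ^ m = vv ^ (-m) := sub_eq_zero.mp hh
  have h2 : vv ^ (2 * m) = 1 := by
    rw [two_mul, zpow_add₀ vv_ne]
    nth_rewrite 2 [h1]
    rw [← zpow_add₀ vv_ne]
    simp
  obtain ⟨k, hk⟩ : ∃ k : ℕ, m = (k : ℤ) + 1 := ⟨(m - 1).toNat, by omega⟩
  rw [hk] at h2
  have hcast : ((2 * (k + 1) : ℕ) : ℤ) = 2 * ((k : ℤ) + 1) := by push_cast; ring
  have : vv ^ (2 * (k + 1)) = 1 := by
    rw [← zpow_natCast, hcast]; exact h2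
  exact vv_pow_ne_one _ (by omega) this

lemma denom_ne : vv - vv⁻¹ ≠ 0 := by
  have := vv_zpow_sub_ne 1 one_pos
  simpa [zpow_one, zpow_neg_one] using this

lemma qint_natsucc_ne (k : ℕ) : qint ((k : ℤ) + 1) ≠ 0 := by
  rw [qint]
  exact div_ne_zero (vv_zpow_sub_ne _ (by positivity)) denom_ne

lemma qfact_ne (n : ℕ) : qfact n ≠ 0 := by
  rw [qfact]
  exact Finset.prod_ne_zero_iff.mpr fun i _ => qint_natsucc_ne i

lemma qbinom_zero (m : ℤ) : qbinom m 0 = 1 := by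
  simp [qbinom, qfall, qfact]

lemma qint_zero : qint 0 = 0 := by simp [qint]

lemma qbinom_nat_eq_zero (u p : ℕ) (h : u < p) : qbinom (u : ℤ) p = 0 := by
  rw [qbinom, qfall, Finset.prod_eq_zero (Finset.mem_range.mpr h) (by simp [qint_zero]), zero_div]

lemma qfact_succ (k : ℕ) : qfact (k + 1) = qfact k * qint ((k : ℤ) + 1) :=
  Finset.prod_range_succ _ _

lemma qfall_succ (m : ℤ) (k : ℕ) : qfall m (k + 1) = qfall m k * qint (m - k) :=
  Finset.prod_range_succ _ _

lemma qfall_succ' (m : ℤ) (k : ℕ) : qfall m (k + 1) = qint m * qfall (m - 1) k := by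
  rw [qfall, Finset.prod_range_succ', qfall]
  rw [mul_comm]
  congr 1
  · norm_num
  · apply Finset.prod_congr rfl
    intro i _
    congr 1
    push_cast; ring

lemma qint_split1 (m b : ℤ) : qint m = vv ^ b * qint (m - b) + vv ^ (b - m) * qint b := by
  rw [qint, qint, qint, mul_div_assoc', mul_div_assoc', ← add_div]
  congr 1
  have h1 := vv_zpow_ne m
  have h2 := vv_zpow_ne b
  simp only [zpow_sub₀ vv_ne, zpow_neg]
  field_simp
  ring

lemma qint_split2 (m b : ℤ) : qint (m - b) = vv ^ b * qint m - vv ^ m * qint b := by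
  rw [qint, qint, qint, mul_div_assoc', mul_div_assoc', div_sub_div_same]
  congr 1
  have h1 := vv_zpow_ne m
  have h2 := vv_zpow_ne b
  simp only [zpow_sub₀ vv_ne, zpow_neg]
  field_simp
  ring

lemma pascal1 (m : ℤ) (k : ℕ) :
    qbinom m (k+1) = vv ^ ((k:ℤ)+1) * qbinom (m-1) (k+1) + vv ^ ((k:ℤ)+1-m) * qbinom (m-1) k := by
  rw [qbinom, qbinom, qbinom, qfact_succ, qfall_succ' m k, qfall_succ (m-1) k]
  rw [show m - 1 - (k:ℤ) = m - ((k:ℤ)+1) by ring]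
  rw [qint_split1 m ((k:ℤ)+1)]
  have h1 := qfact_ne k
  have h2 := qint_natsucc_ne k
  field_simp

lemma pascal2' (m : ℤ) (t : ℕ) :
    qbinom (m-1) (t+1) = vv ^ ((t:ℤ)+1) * qbinom m (t+1) - vv ^ m * qbinom (m-1) t := by
  rw [qbinom, qbinom, qbinom, qfact_succ, qfall_succ' m t, qfall_succ (m-1) t]
  rw [show m - 1 - (t:ℤ) = m - ((t:ℤ)+1) by ring]
  rw [qint_split2 m ((t:ℤ)+1)]
  have h1 := qfact_ne t
  have h2 := qint_natsucc_ne t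
  field_simp

lemma key (u : ℕ) (s : ℤ) (r : ℕ) :
    qbinom (s - u) r =
      ∑ p ∈ Finset.range (r + 1),
        (-1) ^ p * vv ^ ((p : ℤ) * (s - u - r + 1) + (r : ℤ) * u) *
          qbinom (u : ℤ) p * qbinom (s - p) (r - p) := by
  induction u generalizing s r with
  | zero =>
    rw [Finset.sum_eq_single 0]
    · simp [qbinom_zero]
    · intro p _ hne
      rw [qbinom_nat_eq_zero 0 p (Nat.pos_of_ne_zero hne)]
      ring
    · intro h; simp at h
  | succ u ih =>
    cases r with
    | zero => simp [qbinom_zero]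
    | succ t =>
      have ih1 := ih s (t+1)
      have ih2 := ih (s-1) t
      rw [Finset.sum_range_succ'] at ih1
      rw [Finset.sum_range_succ']
      have hterm : ∀ i ∈ Finset.range (t+1),
          (-1) ^ (i+1) * vv ^ ((((i+1:ℕ)) : ℤ) * (s - ((u+1:ℕ) : ℤ) - ((t+1:ℕ) : ℤ) + 1) + ((t+1:ℕ) : ℤ) * ((u+1:ℕ) : ℤ)) *
            qbinom ((u+1:ℕ) : ℤ) (i+1) * qbinom (s - ((i+1:ℕ) : ℤ)) (t+1-(i+1))
          = vv ^ ((t:ℤ)+1) * ((-1) ^ (i+1) * vv ^ ((((i+1:ℕ)) : ℤ) * (s - (u : ℤ) - ((t+1:ℕ) : ℤ) + 1) + ((t+1:ℕ) : ℤ) * (u : ℤ)) *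
              qbinom (u : ℤ) (i+1) * qbinom (s - ((i+1:ℕ) : ℤ)) (t+1-(i+1)))
            - vv ^ (s - (u : ℤ)) * ((-1) ^ i * vv ^ ((i : ℤ) * (s - 1 - (u : ℤ) - (t : ℤ) + 1) + (t : ℤ) * (u : ℤ)) *
              qbinom (u : ℤ) i * qbinom (s - 1 - (i : ℤ)) (t - i)) := by
        intro i hi
        rw [Nat.succ_sub_succ]
        rw [show s - ((i+1:ℕ) : ℤ) = s - 1 - (i:ℤ) by push_cast; ring]
        rw [show ((u+1:ℕ) : ℤ) = (u:ℤ)+1 by push_cast; ring]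
        rw [pascal1 ((u:ℤ)+1) i]
        rw [show (u:ℤ)+1-1 = (u:ℤ) by ring]
        have hm1 : vv ^ ((((i+1:ℕ)) : ℤ) * (s - ((u:ℤ)+1) - ((t+1:ℕ) : ℤ) + 1) + ((t+1:ℕ) : ℤ) * ((u:ℤ)+1)) * vv ^ ((i:ℤ)+1)
            = vv ^ ((t:ℤ)+1) * vv ^ ((((i+1:ℕ)) : ℤ) * (s - (u : ℤ) - ((t+1:ℕ) : ℤ) + 1) + ((t+1:ℕ) : ℤ) * (u : ℤ)) := by
          rw [← zpow_add₀ vv_ne, ← zpow_add₀ vv_ne]; congr 1; push_cast; ring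
        have hm2 : vv ^ ((((i+1:ℕ)) : ℤ) * (s - ((u:ℤ)+1) - ((t+1:ℕ) : ℤ) + 1) + ((t+1:ℕ) : ℤ) * ((u:ℤ)+1)) * vv ^ ((i:ℤ)+1-((u:ℤ)+1))
            = vv ^ (s - (u : ℤ)) * vv ^ ((i : ℤ) * (s - 1 - (u : ℤ) - (t : ℤ) + 1) + (t : ℤ) * (u : ℤ)) := by
          rw [← zpow_add₀ vv_ne, ← zpow_add₀ vv_ne]; congr 1; push_cast; ring
        linear_combination ((-1:Fv) ^ (i+1) * qbinom (u : ℤ) (i+1) * qbinom (s - 1 - (i:ℤ)) (t - i)) * hm1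
          + ((-1:Fv) ^ (i+1) * qbinom (u : ℤ) i * qbinom (s - 1 - (i:ℤ)) (t - i)) * hm2
      rw [Finset.sum_congr rfl hterm, Finset.sum_sub_distrib, ← Finset.mul_sum, ← Finset.mul_sum]
      have hp2 := pascal2' (s - (u:ℤ)) t
      rw [show s - (u:ℤ) - 1 = s - 1 - (u:ℤ) by ring] at hp2
      conv_lhs => rw [show s - ((u+1:ℕ) : ℤ) = s - 1 - (u:ℤ) by push_cast; ring]
      have hF0 : (-1) ^ (0:ℕ) * vv ^ (((0:ℕ) : ℤ) * (s - ((u+1:ℕ) : ℤ) - ((t+1:ℕ) : ℤ) + 1) + ((t+1:ℕ) : ℤ) * ((u+1:ℕ) : ℤ)) *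
            qbinom ((u+1:ℕ) : ℤ) 0 * qbinom (s - ((0:ℕ) : ℤ)) (t+1-0)
          = vv ^ ((t:ℤ)+1) * ((-1) ^ (0:ℕ) * vv ^ (((0:ℕ) : ℤ) * (s - (u : ℤ) - ((t+1:ℕ) : ℤ) + 1) + ((t+1:ℕ) : ℤ) * (u : ℤ)) *
            qbinom (u : ℤ) 0 * qbinom (s - ((0:ℕ) : ℤ)) (t+1-0)) := by
        rw [qbinom_zero, qbinom_zero,
          show (((0:ℕ) : ℤ) * (s - ((u+1:ℕ) : ℤ) - ((t+1:ℕ) : ℤ) + 1) + ((t+1:ℕ) : ℤ) * ((u+1:ℕ) : ℤ))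
            = ((t:ℤ)+1) + (((0:ℕ) : ℤ) * (s - (u : ℤ) - ((t+1:ℕ) : ℤ) + 1) + ((t+1:ℕ) : ℤ) * (u : ℤ)) by push_cast; ring,
          zpow_add₀ vv_ne]
        ring
      linear_combination hp2 + vv ^ ((t:ℤ)+1) * ih1 - vv ^ (s - (u:ℤ)) * ih2 - hF0

/-- Identity (1.160a): for integers `s`, nonnegative integers `u, r`,
`[(s-u) choose r] = ∑_{p=0}^{min(u,r)} (-1)^p v^{p(s-u-r+1)+ru} [u choose p] [(s-p) choose (r-p)]`. -/
theorem qbinom_identity_Ma1 (s : ℤ) (u r : ℕ) :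
    qbinom (s - u) r =
      ∑ p ∈ Finset.range (min u r + 1),
        (-1) ^ p * vv ^ ((p : ℤ) * (s - u - r + 1) + (r : ℤ) * u) *
          qbinom (u : ℤ) p * qbinom (s - p) (r - p) := by
  rw [key u s r]
  apply (Finset.sum_subset (Finset.range_subset_range.mpr (by omega)) _).symm
  intro p hp hnp
  have h1 : p < r + 1 := Finset.mem_range.mp hp
  have h2 : ¬ p < min u r + 1 := fun h => hnp (Finset.mem_range.mpr h)
  rw [qbinom_nat_eq_zero u p (by omega)]
  ring
end
end

section
/- Let R be a discrete valuation ring with uniformizer π, A a free R-module of finite rank, and φ a nonzero R-bilinear form on A. Choose d₁ minimal with φ(A,A) = Rπ^{d₁} and a₁, a₁' ∈ A with φ(a₁, a₁') = π^{d₁}. Setting A₁ = {a ∈ A : φ(a, a₁') = 0} and A₁' = {a ∈ A : φ(a₁, a) = 0}, one has direct sum decompositions A = R a₁ ⊕ A₁ and A = R a₁' ⊕ A₁'. -/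
noncomputable section

/-- Splitting off a hyperbolic-type pair over a DVR: let `R` be a discrete valuation ring
with uniformizer `π`, `A` a free `R`-module of finite rank, and `φ` a nonzero bilinear form
on `A`. If `d₁` satisfies `φ(A,A) = Rπ^{d₁}` and `a₁, a₁' ∈ A` satisfy `φ(a₁,a₁') = π^{d₁}`,
then with `A₁ = {a : φ(a,a₁') = 0}` and `A₁' = {a : φ(a₁,a) = 0}` one has the direct sum
decompositions `A = Ra₁ ⊕ A₁` and `A = Ra₁' ⊕ A₁'`. -/
theorem split_off_pair_DVR
    (R : Type*) [CommRing R] [IsDomain R] [IsDiscreteValuationRing R]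
    (π : R) (hπ : Irreducible π)
    (n : ℕ) (A : Type*) [AddCommGroup A] [Module R A] (b : Module.Basis (Fin n) R A)
    (φ : A →ₗ[R] A →ₗ[R] R) (hne : φ ≠ 0)
    (d₁ : ℕ) (hd₁ : Submodule.span R {r : R | ∃ x y : A, φ x y = r} = Ideal.span {π ^ d₁})
    (a₁ a₁' : A) (ha : φ a₁ a₁' = π ^ d₁) :
    IsCompl (Submodule.span R {a₁}) (LinearMap.ker (φ.flip a₁')) ∧
      IsCompl (Submodule.span R {a₁'}) (LinearMap.ker (φ a₁)) := by
  have hπd : (π : R) ^ d₁ ≠ 0 := pow_ne_zero _ hπ.ne_zero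
  have hdvd : ∀ x y : A, π ^ d₁ ∣ φ x y := by
    intro x y
    rw [← Ideal.mem_span_singleton, ← hd₁]
    exact Submodule.subset_span ⟨x, y, rfl⟩
  constructor
  · constructor
    · rw [Submodule.disjoint_def]
      intro z hz1 hz2
      obtain ⟨r, rfl⟩ := Submodule.mem_span_singleton.mp hz1
      have h0 : φ (r • a₁) a₁' = 0 := hz2
      simp only [map_smul, LinearMap.smul_apply, smul_eq_mul, ha] at h0
      rcases mul_eq_zero.mp h0 with hr | hr
      · simp [hr]
      · exact absurd hr hπd
    · rw [codisjoint_iff, eq_top_iff]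
      intro x _
      obtain ⟨c, hc⟩ := hdvd x a₁'
      refine Submodule.mem_sup.mpr ⟨c • a₁, Submodule.smul_mem _ _ (Submodule.mem_span_singleton_self _),
        x - c • a₁, ?_, by abel⟩
      simp only [LinearMap.mem_ker, LinearMap.flip_apply, map_sub, map_smul,
        LinearMap.sub_apply, LinearMap.smul_apply, smul_eq_mul, ha, hc]
      ring
  · constructor
    · rw [Submodule.disjoint_def]
      intro z hz1 hz2
      obtain ⟨r, rfl⟩ := Submodule.mem_span_singleton.mp hz1
      have h0 : φ a₁ (r • a₁') = 0 := hz2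
      simp only [map_smul, smul_eq_mul, ha] at h0
      rcases mul_eq_zero.mp h0 with hr | hr
      · simp [hr]
      · exact absurd hr hπd
    · rw [codisjoint_iff, eq_top_iff]
      intro x _
      obtain ⟨c, hc⟩ := hdvd a₁ x
      refine Submodule.mem_sup.mpr ⟨c • a₁', Submodule.smul_mem _ _ (Submodule.mem_span_singleton_self _),
        x - c • a₁', ?_, by abel⟩
      simp only [LinearMap.mem_ker, map_sub, map_smul, smul_eq_mul, ha, hc]
      ring
end
end
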